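/- Let n ≤ m, let X ∈ ℝ^{n×m} be the matrix whose i-th row is x̃_iᵀ for vectors x̃_1, …, x̃_n ∈ ℝ^m, and suppose X has rank n. Then for arbitrary labels y_1, …, y_n ∈ {−1,+1}, the maximum ℓ2-margin satisfies max_{‖v‖₂ ≤ 1} min_{i∈[n]} y_i x̃_iᵀ v ≥ s_min,nonzero(X)/√n, where s_min,nonzero(X) denotes the smallest nonzero singular value of X. -/

import Mathlib

open MeasureTheory Real Set
open scoped BigOperators

noncomputable section

/-- Euclidean dot product on `Fin d → ℝ`. -/
def dot {d : ℕ} (u v : Fin d → ℝ) : ℝ := ∑ j, u j * v j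

/-- Euclidean (`ℓ2`) norm on `Fin d → ℝ`. -/
def norm2 {d : ℕ} (u : Fin d → ℝ) : ℝ := Real.sqrt (∑ j, (u j) ^ 2)

/-! Full row rank makes `XXᵀ` invertible, so `y = XXᵀα` for some `α`, and `w = Xᵀα` satisfies
`y_i ⟨x̃_i, w⟩ = y_i² = 1`: the unit vector `w / ‖w‖` has margin `1 / ‖w‖`. On the other hand
`‖w‖² = ⟨α, y⟩ ≤ ‖α‖ √n` and `s_min ≤ ‖Xᵀα‖ / ‖α‖ = ‖w‖ / ‖α‖`, whence
`s_min / √n ≤ ‖w‖ / (‖α‖ √n) ≤ 1 / ‖w‖`. -/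

open Matrix

section Norm2

variable {d : ℕ}

lemma norm2_eq_norm (u : Fin d → ℝ) :
    norm2 u = ‖(WithLp.toLp 2 u : EuclideanSpace ℝ (Fin d))‖ := by
  simp [norm2, EuclideanSpace.norm_eq]

lemma dotProduct_eq_inner (u v : Fin d → ℝ) :
    u ⬝ᵥ v = inner ℝ (WithLp.toLp 2 u : EuclideanSpace ℝ (Fin d)) (WithLp.toLp 2 v) := by
  rw [EuclideanSpace.inner_toLp_toLp, star_trivial, dotProduct_comm]

lemma norm2_nonneg (u : Fin d → ℝ) : 0 ≤ norm2 u := Real.sqrt_nonneg _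

lemma norm2_pos {u : Fin d → ℝ} (hu : u ≠ 0) : 0 < norm2 u := by
  rw [norm2_eq_norm, norm_pos_iff]
  exact fun h => hu (by simpa using congrArg WithLp.ofLp h)

lemma norm2_smul (c : ℝ) (u : Fin d → ℝ) : norm2 (c • u) = |c| * norm2 u := by
  rw [norm2_eq_norm, norm2_eq_norm, WithLp.toLp_smul, norm_smul, Real.norm_eq_abs]

lemma norm2_sq (u : Fin d → ℝ) : norm2 u ^ 2 = u ⬝ᵥ u := by
  rw [norm2_eq_norm, dotProduct_eq_inner, real_inner_self_eq_norm_sq]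

lemma abs_dotProduct_le (u v : Fin d → ℝ) : |u ⬝ᵥ v| ≤ norm2 u * norm2 v := by
  rw [dotProduct_eq_inner, norm2_eq_norm, norm2_eq_norm]
  exact abs_real_inner_le_norm _ _

lemma norm2_eq_sqrt_of_sq_eq_one {y : Fin d → ℝ} (hy : ∀ i, y i ^ 2 = 1) :
    norm2 y = √d := by
  simp [norm2, hy]

end Norm2

lemma Matrix.mulVec_surjective_of_rank_eq {ι κ K : Type*} [Fintype ι] [Fintype κ] [Field K]
    (A : Matrix ι κ K) (hA : A.rank = Fintype.card ι) : Function.Surjective A.mulVec := by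
  have : LinearMap.range A.mulVecLin = ⊤ := by
    apply Submodule.eq_top_of_finrank_eq
    rw [← Matrix.rank, hA, Module.finrank_fintype_fun_eq_card]
  exact LinearMap.range_eq_top.mp this

lemma Matrix.exists_mulVec_vecMul_eq {ι κ R : Type*} [Fintype ι] [Fintype κ] [Field R]
    [LinearOrder R] [IsStrictOrderedRing R] (A : Matrix ι κ R) (hA : A.rank = Fintype.card ι)
    (y : ι → R) :
    ∃ α, A *ᵥ (α ᵥ* A) = y := by
  obtain ⟨α, hα⟩ := (A * Aᵀ).mulVec_surjective_of_rank_eq (by rw [rank_self_mul_transpose, hA]) y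
  exact ⟨α, by rwa [← mulVec_transpose, mulVec_mulVec]⟩

section Margin

variable {ι : Type*} [Fintype ι] {m : ℕ} (A : Matrix ι (Fin m) ℝ) (y : ι → ℝ)

lemma bddAbove_margins [Nonempty ι] :
    BddAbove {c | ∃ v : Fin m → ℝ, norm2 v ≤ 1 ∧ c = ⨅ i, y i * (A *ᵥ v) i} := by
  obtain ⟨i⟩ := ‹Nonempty ι›
  refine ⟨|y i| * norm2 (A i), ?_⟩
  rintro _ ⟨v, hv, rfl⟩
  calc ⨅ i, y i * (A *ᵥ v) i ≤ y i * (A *ᵥ v) i := ciInf_le (Set.finite_range _).bddBelow i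
    _ ≤ |y i| * |A i ⬝ᵥ v| := by rw [← abs_mul]; exact le_abs_self _
    _ ≤ |y i| * (norm2 (A i) * norm2 v) := by gcongr; exact abs_dotProduct_le _ _
    _ ≤ |y i| * norm2 (A i) := by
      rw [← mul_assoc]
      exact mul_le_of_le_one_right (mul_nonneg (abs_nonneg _) (norm2_nonneg _)) hv

lemma inv_norm2_le_sSup_margins [Nonempty ι] {w : Fin m → ℝ} (hw : ∀ i, y i * (A *ᵥ w) i = 1) :
    (norm2 w)⁻¹ ≤ sSup {c | ∃ v : Fin m → ℝ, norm2 v ≤ 1 ∧ c = ⨅ i, y i * (A *ᵥ v) i} := by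
  have hw0 : w ≠ 0 := by
    rintro rfl
    obtain ⟨i⟩ := ‹Nonempty ι›
    simpa using hw i
  have hpos := norm2_pos hw0
  refine le_csSup (bddAbove_margins A y) ⟨(norm2 w)⁻¹ • w, ?_, ?_⟩
  · rw [norm2_smul, abs_inv, abs_of_pos hpos, inv_mul_cancel₀ hpos.ne']
  · simp [mulVec_smul, mul_left_comm _ (norm2 w)⁻¹, hw]

end Margin

lemma sInf_norm2_vecMul_le {n m : ℕ} (A : Matrix (Fin n) (Fin m) ℝ) {α : Fin n → ℝ}
    (hα : α ≠ 0) :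
    sInf {c | ∃ u : Fin n → ℝ, norm2 u = 1 ∧ c = norm2 (u ᵥ* A)} ≤ norm2 (α ᵥ* A) / norm2 α := by
  have hpos := norm2_pos hα
  refine csInf_le ⟨0, ?_⟩ ⟨(norm2 α)⁻¹ • α, ?_, ?_⟩
  · rintro _ ⟨u, -, rfl⟩
    exact norm2_nonneg _
  · rw [norm2_smul, abs_inv, abs_of_pos hpos, inv_mul_cancel₀ hpos.ne']
  · rw [smul_vecMul, norm2_smul, abs_inv, abs_of_pos hpos, inv_mul_eq_div]

lemma norm2_vecMul_sq_le {n m : ℕ} (A : Matrix (Fin n) (Fin m) ℝ) (α : Fin n → ℝ) :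
    norm2 (α ᵥ* A) ^ 2 ≤ norm2 α * norm2 (A *ᵥ (α ᵥ* A)) :=
  calc norm2 (α ᵥ* A) ^ 2 = α ⬝ᵥ (A *ᵥ (α ᵥ* A)) := by rw [norm2_sq, dotProduct_mulVec]
    _ ≤ |α ⬝ᵥ (A *ᵥ (α ᵥ* A))| := le_abs_self _
    _ ≤ _ := abs_dotProduct_le _ _

/-- Since `X` has rank `n`, `s_min,nonzero(X) = min_{‖u‖₂ = 1} ‖Xᵀu‖₂`, the infimum on the left. -/
theorem max_margin_ge_smin_div_sqrt_general
    {n m : ℕ} (hn : 0 < n) (xt : Fin n → Fin m → ℝ)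
    (hrank : (Matrix.of fun i j => xt i j).rank = n)
    (y : Fin n → ℝ) (hy : ∀ i, y i = 1 ∨ y i = -1) :
    sInf {c | ∃ u : Fin n → ℝ, norm2 u = 1 ∧
        c = norm2 (fun j : Fin m => ∑ i, u i * xt i j)} / Real.sqrt n
      ≤ sSup {c | ∃ v : Fin m → ℝ, norm2 v ≤ 1 ∧ c = ⨅ i, y i * dot (xt i) v} := by
  have : Nonempty (Fin n) := ⟨⟨0, hn⟩⟩
  set A : Matrix (Fin n) (Fin m) ℝ := Matrix.of fun i j => xt i j
  have hy2 : ∀ i, y i ^ 2 = 1 := fun i => by rcases hy i with h | h <;> simp [h]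
  obtain ⟨α, hα⟩ := A.exists_mulVec_vecMul_eq (by rw [hrank, Fintype.card_fin]) y
  set w := α ᵥ* A
  have hw0 : w ≠ 0 := fun h => by simpa [← hα, h] using hy2 ⟨0, hn⟩
  have hα0 : α ≠ 0 := by rintro rfl; exact hw0 (zero_vecMul A)
  have hmargin : (norm2 w)⁻¹ ≤ _ := inv_norm2_le_sSup_margins A y (w := w) fun i => by
    rw [hα, ← sq, hy2 i]
  have hsmin := sInf_norm2_vecMul_le A hα0
  have hnorm : norm2 w ^ 2 ≤ norm2 α * √n := by
    rw [← norm2_eq_sqrt_of_sq_eq_one hy2, ← hα]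
    exact norm2_vecMul_sq_le A α
  have hw_pos : 0 < norm2 w := norm2_pos hw0
  have hα_pos : 0 < norm2 α := norm2_pos hα0
  calc _ ≤ norm2 w / norm2 α / √n := by gcongr; exact hsmin
    _ ≤ (norm2 w)⁻¹ := by
      rw [div_div, div_le_iff₀ (by positivity), ← div_eq_inv_mul, le_div_iff₀ hw_pos, ← sq]
      exact hnorm
    _ ≤ _ := hmargin

/-- Let `n ≤ m` and let `X` be the matrix with rows `x̃_iᵀ`, of full row
rank `n`. Then for arbitrary labels `y_i ∈ {±1}`, the maximum `ℓ2`-margin is at least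
`s_min,nonzero(X)/√n`. Since `X` has rank `n`, the smallest nonzero singular value of `X`
is `min_{‖u‖₂ = 1} ‖Xᵀu‖₂`, formalized here as an infimum over unit vectors `u ∈ ℝⁿ`. -/
theorem max_margin_ge_smin_div_sqrt
    {n m : ℕ} (hn : 0 < n) (hnm : n ≤ m) (xt : Fin n → Fin m → ℝ)
    (hrank : (Matrix.of fun i j => xt i j).rank = n)
    (y : Fin n → ℝ) (hy : ∀ i, y i = 1 ∨ y i = -1) :
    sInf {c | ∃ u : Fin n → ℝ, norm2 u = 1 ∧
        c = norm2 (fun j : Fin m => ∑ i, u i * xt i j)} / Real.sqrt n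
      ≤ sSup {c | ∃ v : Fin m → ℝ, norm2 v ≤ 1 ∧ c = ⨅ i, y i * dot (xt i) v} :=
  max_margin_ge_smin_div_sqrt_general hn xt hrank y hy

end
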